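/- arXiv:math/0311074 — 3 statements merged into one kernel-verified Lean document; each statement's English description precedes it below -/
import Mathlib

section
/- For smooth maps A, B : ℝ² → gl(n,ℂ), the family of connections θ_λ = (1−λ)A dξ + (1−λ⁻¹)B dη is flat for every λ ∈ ℂ \ {0} (i.e. (1−λ)∂_η A − (1−λ⁻¹)∂_ξ B = [(1−λ)A, (1−λ⁻¹)B] for all such λ) if and only if A_η = [A,B] and B_ξ = −[A,B]. -/
open Matrix

/-- Entrywise partial derivative in the first variable `ξ`. -/
noncomputable def dXi {n : ℕ} (F : ℝ → ℝ → Matrix (Fin n) (Fin n) ℂ) (ξ η : ℝ) :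
    Matrix (Fin n) (Fin n) ℂ :=
  Matrix.of fun i j => deriv (fun x => F x η i j) ξ

/-- Entrywise partial derivative in the second variable `η`. -/
noncomputable def dEta {n : ℕ} (F : ℝ → ℝ → Matrix (Fin n) (Fin n) ℂ) (ξ η : ℝ) :
    Matrix (Fin n) (Fin n) ℂ :=
  Matrix.of fun i j => deriv (fun y => F ξ y i j) η

/-- the family `θ_λ = (1−λ)A dξ + (1−λ⁻¹)B dη` is flat for every
`λ ∈ ℂ \ {0}` iff `A_η = [A,B]` and `B_ξ = −[A,B]`. -/
theorem stmt2 (n : ℕ) (A B : ℝ → ℝ → Matrix (Fin n) (Fin n) ℂ)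
    (hA : ∀ i j, ContDiff ℝ (⊤ : ℕ∞) (fun q : ℝ × ℝ => A q.1 q.2 i j))
    (hB : ∀ i j, ContDiff ℝ (⊤ : ℕ∞) (fun q : ℝ × ℝ => B q.1 q.2 i j)) :
    (∀ lam : ℂ, lam ≠ 0 → ∀ ξ η : ℝ,
        (1 - lam) • dEta A ξ η - (1 - lam⁻¹) • dXi B ξ η
          = ((1 - lam) • A ξ η) * ((1 - lam⁻¹) • B ξ η)
            - ((1 - lam⁻¹) • B ξ η) * ((1 - lam) • A ξ η))
    ↔ (∀ ξ η : ℝ,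
        dEta A ξ η = A ξ η * B ξ η - B ξ η * A ξ η ∧
        dXi B ξ η = -(A ξ η * B ξ η - B ξ η * A ξ η)) := by
  constructor
  · intro h ξ η
    have h1 := h (-1) (by norm_num) ξ η
    have h2 := h 2 (by norm_num) ξ η
    norm_num at h1 h2
    simp only [Matrix.smul_mul, Matrix.mul_smul, smul_smul] at h1 h2
    norm_num at h1 h2
    constructor
    · linear_combination (norm := module) (6⁻¹ : ℂ) • h1 - (2/3 : ℂ) • h2
    · linear_combination (norm := module) (-3⁻¹ : ℂ) • h1 - (2/3 : ℂ) • h2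
  · intro h lam hl ξ η
    obtain ⟨h1, h2⟩ := h ξ η
    rw [h1, h2]
    simp only [smul_mul_assoc, mul_smul_comm, smul_smul]
    match_scalars <;> field_simp <;> ring
end

section
/- Let σ : SL(2,ℂ) → SL(2,ℂ) be σ(g) = (gᵗ)⁻¹. The set M_σ = { g·σ(g)⁻¹ : g ∈ SU(2) } equals the set of matrices in SU(2) of the form [[z, is],[is, z̄]] with z ∈ ℂ, s ∈ ℝ, |z|² + s² = 1; equivalently, y ∈ SU(2) lies in M_σ if and only if yᵗ = y. -/
/-!
For `g ∈ SU(2)` the product `g gᵀ` is again in `SU(2)` and symmetric. An element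
`[[a, -c̄], [c, ā]]` of `SU(2)` is symmetric iff `c = -c̄`, i.e. `c = i s` with `s` real, which is
the normal form `[[z, i s], [i s, z̄]]`. Conversely every such `y` equals `g gᵀ = g²` for a square
root `g` of the same normal form.
-/

open Matrix ComplexConjugate

/-- The set `SU(2)` as 2×2 complex matrices. -/
def SU2 : Set (Matrix (Fin 2) (Fin 2) ℂ) :=
  {g | gᴴ * g = 1 ∧ g.det = 1}

lemma mul_transpose_self_mem_specialUnitaryGroup {n α : Type*} [DecidableEq n] [Fintype n]
    [CommRing α] [StarRing α] {g : Matrix n n α} (hg : g ∈ specialUnitaryGroup n α) :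
    g * gᵀ ∈ specialUnitaryGroup n α := by
  obtain ⟨hu, hdet⟩ := mem_specialUnitaryGroup_iff.mp hg
  refine mul_mem hg (mem_specialUnitaryGroup_iff.mpr ⟨?_, ?_⟩)
  · exact transpose_mem_unitaryGroup_iff.mpr hu
  · rw [det_transpose, hdet]

lemma mem_SU2_iff_mem_specialUnitaryGroup {g : Matrix (Fin 2) (Fin 2) ℂ} :
    g ∈ SU2 ↔ g ∈ specialUnitaryGroup (Fin 2) ℂ := by
  rw [mem_specialUnitaryGroup_iff, mem_unitaryGroup_iff']
  rfl

lemma mem_SU2_fin_two_iff (a b c d : ℂ) :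
    !![a, b; c, d] ∈ SU2 ↔
      d = conj a ∧ b = -conj c ∧ Complex.normSq a + Complex.normSq c = 1 := by
  rw [← Complex.ofReal_inj, Complex.ofReal_add, Complex.normSq_eq_conj_mul_self,
    Complex.normSq_eq_conj_mul_self, Complex.ofReal_one]
  simp only [SU2, Set.mem_ofPred_eq, ← Matrix.ext_iff, Fin.forall_fin_two, mul_apply,
    Fin.sum_univ_two, conjTranspose_apply, one_apply, det_fin_two_of, of_apply, cons_val_zero,
    cons_val_one, RCLike.star_def, Fin.isValue, if_true, if_false, one_ne_zero, zero_ne_one]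
  constructor
  · rintro ⟨⟨⟨h1, h2⟩, -⟩, hdet⟩
    exact ⟨by linear_combination -d * h1 + c * h2 + conj a * hdet,
      by linear_combination -b * h1 + a * h2 - conj c * hdet, h1⟩
  · rintro ⟨rfl, rfl, h⟩
    simp only [map_neg, Complex.conj_conj]
    exact ⟨⟨⟨h, by ring⟩, by ring, by linear_combination h⟩, by linear_combination h⟩

def symmSU2 (z : ℂ) (s : ℝ) : Matrix (Fin 2) (Fin 2) ℂ :=
  !![z, Complex.I * s; Complex.I * s, conj z]

lemma transpose_symmSU2 (z : ℂ) (s : ℝ) : (symmSU2 z s)ᵀ = symmSU2 z s := by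
  simp [symmSU2, ← Matrix.ext_iff, Fin.forall_fin_two]

lemma symmSU2_mem_SU2 {z : ℂ} {s : ℝ} (h : ‖z‖ ^ 2 + s ^ 2 = 1) : symmSU2 z s ∈ SU2 := by
  rw [symmSU2, mem_SU2_fin_two_iff]
  refine ⟨rfl, by simp, ?_⟩
  rwa [Complex.normSq_mul, Complex.normSq_I, Complex.normSq_ofReal, one_mul, ← Complex.sq_norm,
    ← sq]

lemma exists_eq_symmSU2 {y : Matrix (Fin 2) (Fin 2) ℂ} (hy : y ∈ SU2) (hsym : yᵀ = y) :
    ∃ (z : ℂ) (s : ℝ), ‖z‖ ^ 2 + s ^ 2 = 1 ∧ y = symmSU2 z s := by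
  rw [eta_fin_two y, mem_SU2_fin_two_iff] at hy
  obtain ⟨hd, hb, hn⟩ := hy
  have hbc : y 0 1 = y 1 0 := congr_fun (congr_fun hsym 1) 0
  have hre : (y 1 0).re = 0 := by
    have := congrArg Complex.re (hbc.symm.trans hb)
    simp only [Complex.neg_re, Complex.conj_re] at this
    linarith
  have hc : y 1 0 = Complex.I * (y 1 0).im := by
    apply Complex.ext <;> simp [hre]
  have hnormSq : Complex.normSq (y 1 0) = (y 1 0).im ^ 2 := by
    rw [Complex.normSq_apply, hre]; ring
  refine ⟨y 0 0, (y 1 0).im, by rwa [Complex.sq_norm, ← hnormSq], ?_⟩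
  conv_lhs => rw [eta_fin_two y]
  rw [symmSU2, hd, hbc, ← hc]

lemma symmSU2_mul_self (z : ℂ) (s : ℝ) :
    symmSU2 z s * symmSU2 z s = symmSU2 (z ^ 2 - s ^ 2) (2 * s * z.re) := by
  have hre : z + conj z = 2 * z.re := by rw [Complex.add_conj]; push_cast; ring
  simp only [symmSU2, mul_fin_two, EmbeddingLike.apply_eq_iff_eq, vecCons_inj, and_true,
    map_sub, map_pow, Complex.conj_ofReal]
  push_cast
  refine ⟨⟨?_, ?_⟩, ?_, ?_⟩
  · linear_combination s ^ 2 * Complex.I_sq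
  · linear_combination (Complex.I * s) * hre
  · linear_combination (Complex.I * s) * hre
  · linear_combination s ^ 2 * Complex.I_sq

/- For `y = symmSU2 z s ≠ -1` the root is `(1 + y) / √(2 + tr y)`, since Cayley–Hamilton gives
`(1 + y)² = (2 + tr y) y`; for `y = -1` it is `symmSU2 I 0 = diag(i, -i)`. -/
lemma exists_symmSU2_mul_self_eq {z : ℂ} {s : ℝ} (h : ‖z‖ ^ 2 + s ^ 2 = 1) :
    ∃ (w : ℂ) (t : ℝ), ‖w‖ ^ 2 + t ^ 2 = 1 ∧ symmSU2 w t * symmSU2 w t = symmSU2 z s := by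
  suffices ∃ (w : ℂ) (t : ℝ), ‖w‖ ^ 2 + t ^ 2 = 1 ∧ w ^ 2 - (t : ℂ) ^ 2 = z ∧ 2 * t * w.re = s by
    obtain ⟨w, t, hwt, hz, hs⟩ := this
    exact ⟨w, t, hwt, by rw [symmSU2_mul_self, hz, hs]⟩
  have h' : z.re ^ 2 + z.im ^ 2 + s ^ 2 = 1 := by
    rw [← h, Complex.sq_norm, Complex.normSq_apply]; ring
  rcases (show -1 ≤ z.re by nlinarith).eq_or_lt with hre | hre
  · have him : z.im = 0 := by nlinarith
    have hs : s = 0 := by nlinarith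
    refine ⟨Complex.I, 0, by simp, ?_, by simp [hs]⟩
    apply Complex.ext <;> simp [← hre, him]
  · obtain ⟨r, hr, hr2⟩ : ∃ r : ℝ, 0 < r ∧ r ^ 2 = 2 * (1 + z.re) :=
      ⟨√(2 * (1 + z.re)), Real.sqrt_pos.mpr (by linarith), Real.sq_sqrt (by linarith)⟩
    have hr0 : (r : ℂ) ≠ 0 := by exact_mod_cast hr.ne'
    have hrC : (r : ℂ) ^ 2 = 2 + z + conj z := by
      rw [add_assoc, Complex.add_conj]; exact_mod_cast hr2.trans (by ring)
    have hsC : (s : ℂ) ^ 2 = 1 - z * conj z := by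
      rw [Complex.mul_conj, ← Complex.sq_norm]; exact_mod_cast eq_sub_of_add_eq' h
    refine ⟨(1 + z) / r, s / r, ?_, ?_, ?_⟩
    · rw [norm_div, Complex.norm_real, Real.norm_of_nonneg hr.le, div_pow, div_pow, ← add_div,
        div_eq_one_iff_eq (by positivity), Complex.sq_norm, ← Complex.ofReal_inj]
      push_cast
      rw [Complex.normSq_eq_conj_mul_self, map_add, map_one]
      linear_combination hsC - hrC
    · push_cast
      field_simp
      linear_combination -hsC - z * hrC
    · rw [Complex.div_ofReal_re, Complex.add_re, Complex.one_re]
      field_simp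
      linear_combination -s * hr2

/-- `M_σ = { g gᵗ : g ∈ SU(2) }` equals the set of matrices
`[[z, is],[is, z̄]]` with `|z|² + s² = 1`, and equals `{ y ∈ SU(2) : yᵗ = y }`. -/
theorem stmt12 :
    {y : Matrix (Fin 2) (Fin 2) ℂ | ∃ g ∈ SU2, y = g * gᵀ}
      = {y : Matrix (Fin 2) (Fin 2) ℂ | ∃ (z : ℂ) (s : ℝ),
          ‖z‖ ^ 2 + s ^ 2 = 1 ∧
          y = !![z, Complex.I * (s : ℂ); Complex.I * (s : ℂ), conj z]} ∧
    {y : Matrix (Fin 2) (Fin 2) ℂ | ∃ g ∈ SU2, y = g * gᵀ}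
      = {y : Matrix (Fin 2) (Fin 2) ℂ | y ∈ SU2 ∧ yᵀ = y} := by
  have hM : {y | ∃ g ∈ SU2, y = g * gᵀ} =
      {y | ∃ (z : ℂ) (s : ℝ), ‖z‖ ^ 2 + s ^ 2 = 1 ∧ y = symmSU2 z s} := by
    ext y
    constructor
    · rintro ⟨g, hg, rfl⟩
      rw [mem_SU2_iff_mem_specialUnitaryGroup] at hg
      refine exists_eq_symmSU2 ?_ (isSymm_mul_transpose_self g)
      exact mem_SU2_iff_mem_specialUnitaryGroup.mpr (mul_transpose_self_mem_specialUnitaryGroup hg)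
    · rintro ⟨z, s, h, rfl⟩
      obtain ⟨w, t, hwt, hsq⟩ := exists_symmSU2_mul_self_eq h
      exact ⟨symmSU2 w t, symmSU2_mem_SU2 hwt, by rw [transpose_symmSU2, hsq]⟩
  refine ⟨hM, hM.trans ?_⟩
  ext y
  constructor
  · rintro ⟨z, s, h, rfl⟩
    exact ⟨symmSU2_mem_SU2 h, transpose_symmSU2 z s⟩
  · rintro ⟨hy, hsym⟩
    exact exists_eq_symmSU2 hy hsym
end

section
/- Set a = diag(i,−i), u = [[0, q_x/2],[−q_x/2, 0]], v = −(i/4)[[cos q, sin q],[sin q, −cos q]], where q : ℝ² → ℝ is smooth with coordinates (x,t). Then (a,u,v) satisfies the −1 flow equations a_t = 0, u_t = [a,v], v_x = −[u,v] if and only if q satisfies the sine-Gordon equation q_{xt} = sin q. -/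
open Matrix

noncomputable def dXm (F : ℝ → ℝ → Matrix (Fin 2) (Fin 2) ℂ) (x t : ℝ) :
    Matrix (Fin 2) (Fin 2) ℂ :=
  Matrix.of fun i j => deriv (fun x' => F x' t i j) x

noncomputable def dTm (F : ℝ → ℝ → Matrix (Fin 2) (Fin 2) ℂ) (x t : ℝ) :
    Matrix (Fin 2) (Fin 2) ℂ :=
  Matrix.of fun i j => deriv (fun t' => F x t' i j) t

/-- with `a = diag(i,−i)`, `u = [[0,q_x/2],[−q_x/2,0]]`,
`v = −(i/4)[[cos q, sin q],[sin q, −cos q]]`, the triple `(a,u,v)` satisfies the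
`−1` flow equations `a_t = 0`, `u_t = [a,v]`, `v_x = −[u,v]` iff `q` satisfies
the sine-Gordon equation `q_{xt} = sin q`. -/
theorem stmt15 (q : ℝ → ℝ → ℝ)
    (hq : ContDiff ℝ (⊤ : ℕ∞) (fun p : ℝ × ℝ => q p.1 p.2))
    (a : Matrix (Fin 2) (Fin 2) ℂ)
    (ha : a = !![Complex.I, 0; 0, -Complex.I])
    (u v : ℝ → ℝ → Matrix (Fin 2) (Fin 2) ℂ)
    (hu : ∀ x t : ℝ, u x t =
      !![0, ((deriv (fun x' => q x' t) x : ℝ) : ℂ) / 2;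
         -((deriv (fun x' => q x' t) x : ℝ) : ℂ) / 2, 0])
    (hv : ∀ x t : ℝ, v x t = (-(Complex.I / 4)) •
      !![(Real.cos (q x t) : ℂ), (Real.sin (q x t) : ℂ);
         (Real.sin (q x t) : ℂ), -(Real.cos (q x t) : ℂ)]) :
    ((∀ x t : ℝ, dTm (fun _ _ => a) x t = 0) ∧
     (∀ x t : ℝ, dTm u x t = a * v x t - v x t * a) ∧
     (∀ x t : ℝ, dXm v x t = -(u x t * v x t - v x t * u x t)))
    ↔ (∀ x t : ℝ,
        deriv (fun t' => deriv (fun x' => q x' t') x) t = Real.sin (q x t)) := by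
  set f : ℝ × ℝ → ℝ := fun p => q p.1 p.2 with hf
  set g : ℝ × ℝ → ℝ := fun p => fderiv ℝ f p (1, 0) with hgdef
  have hg : ContDiff ℝ (⊤ : ℕ∞) g := (hq.fderiv_right (by simp)).clm_apply contDiff_const
  have hx : ∀ x t : ℝ, HasDerivAt (fun x' => q x' t) (g (x, t)) x := by
    intro x t
    have h1 : HasDerivAt (fun x' : ℝ => (x', t)) ((1 : ℝ), (0 : ℝ)) x :=
      (hasDerivAt_id x).prodMk (hasDerivAt_const x t)
    exact ((hq.differentiable (by simp) (x, t)).hasFDerivAt.comp_hasDerivAt x h1)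
  have hdx : ∀ x t : ℝ, deriv (fun x' => q x' t) x = g (x, t) := fun x t => (hx x t).deriv
  have hgt : ∀ x t : ℝ, HasDerivAt (fun t' => g (x, t')) (deriv (fun t' => g (x, t')) t) t := by
    intro x t
    exact (((hg.differentiable (by simp)).comp
      ((differentiable_const x).prodMk differentiable_id)).differentiableAt).hasDerivAt
  -- the target rewritten
  have htarget : ∀ x t : ℝ, deriv (fun t' => deriv (fun x' => q x' t') x) t
      = deriv (fun t' => g (x, t')) t := by
    intro x t
    simp only [hdx]
  -- complex derivative of the (0,1) entry of u in t
  have hut : ∀ x t : ℝ, HasDerivAt (fun t' => ((g (x, t') : ℝ) : ℂ) / 2)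
      (((deriv (fun t' => g (x, t')) t : ℝ) : ℂ) / 2) t := by
    intro x t
    exact (hgt x t).ofReal_comp.div_const 2
  have hu01 : ∀ x t : ℝ, (fun t' => u x t' 0 1) = fun t' => ((g (x, t') : ℝ) : ℂ) / 2 := by
    intro x t
    funext t'
    rw [hu]
    simp [hdx]
  constructor
  · rintro ⟨-, h2, -⟩ x t
    have h := congrArg (fun M => M 0 1) (h2 x t)
    simp only [dTm, Matrix.of_apply] at h
    rw [hu01 x t, (hut x t).deriv] at h
    have hrhs : (a * v x t - v x t * a) 0 1 = ((Real.sin (q x t) : ℝ) : ℂ) / 2 := by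
      rw [ha, hv]
      simp [Matrix.mul_apply, Fin.sum_univ_two]
      linear_combination (-(Complex.sin ((q x t : ℝ) : ℂ)) / 2) * Complex.I_sq
    rw [hrhs] at h
    rw [htarget x t]
    field_simp at h
    exact_mod_cast h
  · intro hSG
    have hG : ∀ x t : ℝ, deriv (fun t' => g (x, t')) t = Real.sin (q x t) := by
      intro x t
      rw [← htarget x t]; exact hSG x t
    refine ⟨?_, ?_, ?_⟩
    · intro x t
      ext i j
      simp [dTm]
    · intro x t
      ext i j
      simp only [dTm, Matrix.of_apply]
      fin_cases i <;> fin_cases j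
      · show deriv (fun t' => u x t' 0 0) t = (a * v x t - v x t * a) 0 0
        have : (fun t' => u x t' 0 0) = fun _ => (0 : ℂ) := by
          funext t'; rw [hu]; simp
        rw [this, deriv_const, ha, hv]
        simp [Matrix.mul_apply, Fin.sum_univ_two]
        ring
      · show deriv (fun t' => u x t' 0 1) t = (a * v x t - v x t * a) 0 1
        rw [hu01 x t, (hut x t).deriv, hG, ha, hv]
        simp [Matrix.mul_apply, Fin.sum_univ_two]
        linear_combination ((Complex.sin ((q x t : ℝ) : ℂ)) / 2) * Complex.I_sq
      · show deriv (fun t' => u x t' 1 0) t = (a * v x t - v x t * a) 1 0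
        have : (fun t' => u x t' 1 0) = fun t' => -(((g (x, t') : ℝ) : ℂ) / 2) := by
          funext t'; rw [hu]; simp [hdx]; ring
        rw [this, ((hut x t).fun_neg).deriv, hG, ha, hv]
        simp [Matrix.mul_apply, Fin.sum_univ_two]
        linear_combination (-(Complex.sin ((q x t : ℝ) : ℂ)) / 2) * Complex.I_sq
      · show deriv (fun t' => u x t' 1 1) t = (a * v x t - v x t * a) 1 1
        have : (fun t' => u x t' 1 1) = fun _ => (0 : ℂ) := by
          funext t'; rw [hu]; simp
        rw [this, deriv_const, ha, hv]
        simp [Matrix.mul_apply, Fin.sum_univ_two]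
        ring
    · intro x t
      have hcos : HasDerivAt (fun x' => -(Complex.I / 4) * ((Real.cos (q x' t) : ℝ) : ℂ))
          (-(Complex.I / 4) * ((-Real.sin (q x t) * g (x, t) : ℝ) : ℂ)) x :=
        (((Real.hasDerivAt_cos (q x t)).comp x (hx x t)).ofReal_comp).const_mul _
      have hsin : HasDerivAt (fun x' => -(Complex.I / 4) * ((Real.sin (q x' t) : ℝ) : ℂ))
          (-(Complex.I / 4) * ((Real.cos (q x t) * g (x, t) : ℝ) : ℂ)) x :=
        (((Real.hasDerivAt_sin (q x t)).comp x (hx x t)).ofReal_comp).const_mul _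
      ext i j
      simp only [dXm, Matrix.of_apply]
      fin_cases i <;> fin_cases j
      · show deriv (fun x' => v x' t 0 0) x = (-(u x t * v x t - v x t * u x t)) 0 0
        have : (fun x' => v x' t 0 0) = fun x' => -(Complex.I / 4) * ((Real.cos (q x' t) : ℝ) : ℂ) := by
          funext x'; rw [hv]; simp
        rw [this, hcos.deriv, hu, hv]
        simp [Matrix.mul_apply, Fin.sum_univ_two, hdx]
        ring
      · show deriv (fun x' => v x' t 0 1) x = (-(u x t * v x t - v x t * u x t)) 0 1
        have : (fun x' => v x' t 0 1) = fun x' => -(Complex.I / 4) * ((Real.sin (q x' t) : ℝ) : ℂ) := by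
          funext x'; rw [hv]; simp
        rw [this, hsin.deriv, hu, hv]
        simp [Matrix.mul_apply, Fin.sum_univ_two, hdx]
        ring
      · show deriv (fun x' => v x' t 1 0) x = (-(u x t * v x t - v x t * u x t)) 1 0
        have : (fun x' => v x' t 1 0) = fun x' => -(Complex.I / 4) * ((Real.sin (q x' t) : ℝ) : ℂ) := by
          funext x'; rw [hv]; simp
        rw [this, hsin.deriv, hu, hv]
        simp [Matrix.mul_apply, Fin.sum_univ_two, hdx]
        ring
      · show deriv (fun x' => v x' t 1 1) x = (-(u x t * v x t - v x t * u x t)) 1 1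
        have : (fun x' => v x' t 1 1) = fun x' => -(-(Complex.I / 4) * ((Real.cos (q x' t) : ℝ) : ℂ)) := by
          funext x'; rw [hv]; simp
        rw [this, hcos.fun_neg.deriv, hu, hv]
        simp [Matrix.mul_apply, Fin.sum_univ_two, hdx]
        ring
end
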